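/- (Theorem 3.3) Let A ∈ ℝ^{m×p} have all rows nonzero, B ∈ ℝ^{q×n}, C ∈ ℝ^{m×n}, and suppose AXB = C is consistent. Let 0 < α < 2/‖B‖². Define the cyclic BK iterates from an arbitrary X⁰ ∈ ℝ^{p×q} by X^{k+1} = X^k + (α/‖A_{i_k,:}‖²) A_{i_k,:}ᵀ (C_{i_k,:} − A_{i_k,:} X^k B) Bᵀ with i_k = (k mod m) + 1. Then the sequence (X^k) converges (in Frobenius norm) to X⋆⁰ := A⁺ C B⁺ + X⁰ − A⁺ A X⁰ B B⁺, which is a solution of AXB = C. -/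

import Mathlib

set_option maxHeartbeats 1000000


open Matrix Finset Filter Topology

/-- Squared Euclidean norm of a vector. -/
noncomputable def vnormSq {k : ℕ} (v : Fin k → ℝ) : ℝ := ∑ j, (v j) ^ 2

/-- Squared Frobenius norm of a matrix. -/
noncomputable def frobSq {a b : ℕ} (X : Matrix (Fin a) (Fin b) ℝ) : ℝ := ∑ i, ∑ j, (X i j) ^ 2

/-- Frobenius norm of a matrix. -/
noncomputable def frobNorm {a b : ℕ} (X : Matrix (Fin a) (Fin b) ℝ) : ℝ := Real.sqrt (frobSq X)

/-- Frobenius (trace) inner product `⟨X, Y⟩_F = tr(Xᵀ Y)`. -/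
noncomputable def frobInner {a b : ℕ} (X Y : Matrix (Fin a) (Fin b) ℝ) : ℝ := Matrix.trace (Xᵀ * Y)

/-- Spectral (operator 2-) norm of a matrix. -/
noncomputable def specNorm {a b : ℕ} (B : Matrix (Fin a) (Fin b) ℝ) : ℝ :=
  ‖LinearMap.toContinuousLinearMap (Matrix.toEuclideanLin B)‖

lemma vnormSq_nonneg {k : ℕ} (v : Fin k → ℝ) : 0 ≤ vnormSq v :=
  Finset.sum_nonneg fun _ _ => sq_nonneg _

lemma frobSq_nonneg {a b : ℕ} (X : Matrix (Fin a) (Fin b) ℝ) : 0 ≤ frobSq X :=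
  Finset.sum_nonneg fun _ _ => Finset.sum_nonneg fun _ _ => sq_nonneg _

lemma vnormSq_pos {k : ℕ} {v : Fin k → ℝ} (h : v ≠ 0) : 0 < vnormSq v := by
  rcases Function.ne_iff.mp h with ⟨t, ht⟩
  exact Finset.sum_pos' (fun _ _ => sq_nonneg _)
    ⟨t, Finset.mem_univ t, by simpa using pow_pos (abs_pos.mpr (by simpa using ht)) 2 |>.trans_eq (by rw [sq_abs])⟩

lemma frobSq_eq_sum_rows {a b : ℕ} (X : Matrix (Fin a) (Fin b) ℝ) :
    frobSq X = ∑ i, vnormSq (X i) := rfl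

lemma vnormSq_sub_le {k : ℕ} (u v : Fin k → ℝ) :
    vnormSq (u - v) ≤ 2 * vnormSq u + 2 * vnormSq v := by
  unfold vnormSq
  rw [Finset.mul_sum, Finset.mul_sum, ← Finset.sum_add_distrib]
  refine Finset.sum_le_sum fun j _ => ?_
  simp only [Pi.sub_apply]
  nlinarith [sq_nonneg (u j + v j)]

lemma vnormSq_row_le {a b : ℕ} (M : Matrix (Fin a) (Fin b) ℝ) (i : Fin a) :
    vnormSq (M i) ≤ frobSq M := by
  rw [frobSq_eq_sum_rows]
  exact Finset.single_le_sum (fun j _ => vnormSq_nonneg _) (Finset.mem_univ i)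

lemma vnormSq_mulVec_le {a b : ℕ} (M : Matrix (Fin a) (Fin b) ℝ) (v : Fin b → ℝ) :
    vnormSq (M *ᵥ v) ≤ frobSq M * vnormSq v := by
  unfold vnormSq frobSq
  rw [Finset.sum_mul]
  refine Finset.sum_le_sum fun i _ => ?_
  calc (M *ᵥ v) i ^ 2 = (∑ j, M i j * v j) ^ 2 := rfl
    _ ≤ (∑ j, (M i j)^2) * ∑ j, (v j)^2 := Finset.sum_mul_sq_le_sq_mul_sq _ _ _

lemma frobSq_mul_le {a b c : ℕ} (M : Matrix (Fin a) (Fin b) ℝ) (N : Matrix (Fin b) (Fin c) ℝ) :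
    frobSq (M * N) ≤ frobSq M * frobSq N := by
  unfold frobSq
  rw [Finset.sum_mul]
  refine Finset.sum_le_sum fun i _ => ?_
  calc ∑ j, (M * N) i j ^ 2
      ≤ ∑ j, (∑ t, (M i t)^2) * ∑ t, (N t j)^2 := by
        refine Finset.sum_le_sum fun j _ => ?_
        calc (M * N) i j ^ 2 = (∑ t, M i t * N t j) ^ 2 := by rw [Matrix.mul_apply]
          _ ≤ (∑ t, (M i t)^2) * ∑ t, (N t j)^2 := Finset.sum_mul_sq_le_sq_mul_sq _ _ _
    _ = (∑ t, (M i t)^2) * ∑ t, ∑ j, (N t j)^2 := by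
        rw [← Finset.mul_sum, Finset.sum_comm]

lemma vnormSq_eq_norm_sq {k : ℕ} (v : Fin k → ℝ) :
    vnormSq v = ‖(WithLp.equiv 2 (Fin k → ℝ)).symm v‖ ^ 2 := by
  rw [EuclideanSpace.norm_eq, Real.sq_sqrt (Finset.sum_nonneg fun _ _ => sq_nonneg _)]
  simp [vnormSq, Real.norm_eq_abs, sq_abs]

lemma vnormSq_mulVec_le_spec {a b : ℕ} (M : Matrix (Fin a) (Fin b) ℝ) (v : Fin b → ℝ) :
    vnormSq (M *ᵥ v) ≤ specNorm M ^ 2 * vnormSq v := by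
  rw [vnormSq_eq_norm_sq, vnormSq_eq_norm_sq]
  have h := (LinearMap.toContinuousLinearMap (Matrix.toEuclideanLin M)).le_opNorm
    ((WithLp.equiv 2 (Fin b → ℝ)).symm v)
  have he : (LinearMap.toContinuousLinearMap (Matrix.toEuclideanLin M))
      ((WithLp.equiv 2 (Fin b → ℝ)).symm v) = (WithLp.equiv 2 (Fin a → ℝ)).symm (M *ᵥ v) := by
    simp [LinearMap.coe_toContinuousLinearMap']
  rw [he] at h
  have := mul_self_le_mul_self (norm_nonneg _) h
  calc ‖(WithLp.equiv 2 (Fin a → ℝ)).symm (M *ᵥ v)‖ ^ 2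
      ≤ (specNorm M * ‖(WithLp.equiv 2 (Fin b → ℝ)).symm v‖)^2 := by
        rw [sq, sq]; exact this
    _ = specNorm M ^2 * ‖(WithLp.equiv 2 (Fin b → ℝ)).symm v‖^2 := by ring

lemma mul_vecMulVec' {a b c : ℕ} (M : Matrix (Fin a) (Fin b) ℝ) (u : Fin b → ℝ) (v : Fin c → ℝ) :
    M * vecMulVec u v = vecMulVec (M *ᵥ u) v := by
  ext i j
  simp only [Matrix.mul_apply, Matrix.vecMulVec_apply, Matrix.mulVec, dotProduct,
    Finset.sum_mul]
  exact Finset.sum_congr rfl fun t _ => by ring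

lemma vecMulVec_mul' {a b c : ℕ} (u : Fin a → ℝ) (v : Fin b → ℝ) (M : Matrix (Fin b) (Fin c) ℝ) :
    vecMulVec u v * M = vecMulVec u (Mᵀ *ᵥ v) := by
  ext i j
  simp only [Matrix.mul_apply, Matrix.vecMulVec_apply, Matrix.mulVec, dotProduct,
    Matrix.transpose_apply, Finset.mul_sum]
  exact Finset.sum_congr rfl fun t _ => by ring

lemma frobSq_smul {a b : ℕ} (c : ℝ) (X : Matrix (Fin a) (Fin b) ℝ) :
    frobSq (c • X) = c ^ 2 * frobSq X := by
  unfold frobSq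
  simp only [Matrix.smul_apply, smul_eq_mul, mul_pow, Finset.mul_sum]

lemma frobSq_vecMulVec {a b : ℕ} (u : Fin a → ℝ) (v : Fin b → ℝ) :
    frobSq (vecMulVec u v) = vnormSq u * vnormSq v := by
  unfold frobSq vnormSq
  rw [Finset.sum_mul]
  refine Finset.sum_congr rfl fun i _ => ?_
  rw [Finset.mul_sum]
  exact Finset.sum_congr rfl fun j _ => by rw [Matrix.vecMulVec_apply]; ring

lemma frobSq_sub_expand {a b : ℕ} (X Y : Matrix (Fin a) (Fin b) ℝ) :
    frobSq (X - Y) = frobSq X - 2 * (∑ i, ∑ j, X i j * Y i j) + frobSq Y := by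
  unfold frobSq
  have h : ∀ i : Fin a, ∑ j, (X i j - Y i j) ^ 2
      = ∑ j, (X i j)^2 - 2 * (∑ j, X i j * Y i j) + ∑ j, (Y i j)^2 := by
    intro i
    rw [Finset.mul_sum, ← Finset.sum_sub_distrib, ← Finset.sum_add_distrib]
    exact Finset.sum_congr rfl fun j _ => by ring
  calc ∑ i, ∑ j, ((X - Y) i j) ^ 2
      = ∑ i, (∑ j, (X i j)^2 - 2 * (∑ j, X i j * Y i j) + ∑ j, (Y i j)^2) := by
        refine Finset.sum_congr rfl fun i _ => ?_
        rw [← h i]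
        exact Finset.sum_congr rfl fun j _ => by rw [Matrix.sub_apply]
    _ = _ := by
        rw [Finset.mul_sum, ← Finset.sum_sub_distrib, ← Finset.sum_add_distrib]

/-- The key inner-product identity. -/
lemma inner_step {m p q n : ℕ} (A : Matrix (Fin m) (Fin p) ℝ) (B : Matrix (Fin q) (Fin n) ℝ)
    (E : Matrix (Fin p) (Fin q) ℝ) (i : Fin m) :
    ∑ x, ∑ j, E x j * vecMulVec (A i) (B *ᵥ (A * E * B) i) x j
      = vnormSq ((A * E * B) i) := by
  have h1 : ∀ x j, E x j * vecMulVec (A i) (B *ᵥ (A * E * B) i) x j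
      = ∑ t, (A i x * E x j) * (B j t * (A * E * B) i t) := by
    intro x j
    simp only [Matrix.vecMulVec_apply, Matrix.mulVec, dotProduct, Finset.mul_sum]
    exact Finset.sum_congr rfl fun t _ => by ring
  have h2 : ∀ t, ∑ j, ∑ x, (A i x * E x j) * (B j t * (A * E * B) i t)
      = ((A * E * B) i t) * ((A * E * B) i t) := by
    intro t
    have hw : (A * E * B) i t = ∑ j, (∑ x, A i x * E x j) * B j t := by
      simp [Matrix.mul_apply]
    calc ∑ j, ∑ x, (A i x * E x j) * (B j t * (A * E * B) i t)
        = (∑ j, (∑ x, A i x * E x j) * B j t) * ((A * E * B) i t) := by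
          rw [Finset.sum_mul]
          refine Finset.sum_congr rfl fun j _ => ?_
          rw [Finset.sum_mul, Finset.sum_mul]
          exact Finset.sum_congr rfl fun x _ => by ring
      _ = _ := by rw [← hw]
  calc ∑ x, ∑ j, E x j * vecMulVec (A i) (B *ᵥ (A * E * B) i) x j
      = ∑ x, ∑ j, ∑ t, (A i x * E x j) * (B j t * (A * E * B) i t) :=
        Finset.sum_congr rfl fun x _ => Finset.sum_congr rfl fun j _ => h1 x j
    _ = ∑ x, ∑ t, ∑ j, (A i x * E x j) * (B j t * (A * E * B) i t) := by
        refine Finset.sum_congr rfl fun x _ => ?_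
        rw [Finset.sum_comm]
    _ = ∑ t, ∑ x, ∑ j, (A i x * E x j) * (B j t * (A * E * B) i t) := by
        rw [Finset.sum_comm]
    _ = ∑ t, ∑ j, ∑ x, (A i x * E x j) * (B j t * (A * E * B) i t) := by
        refine Finset.sum_congr rfl fun t _ => ?_
        rw [Finset.sum_comm]
    _ = ∑ t, ((A * E * B) i t) * ((A * E * B) i t) :=
        Finset.sum_congr rfl fun t _ => h2 t
    _ = vnormSq ((A * E * B) i) := Finset.sum_congr rfl fun t _ => (sq _).symm

lemma step_frobSq {m p q n : ℕ} (A : Matrix (Fin m) (Fin p) ℝ) (B : Matrix (Fin q) (Fin n) ℝ)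
    (E : Matrix (Fin p) (Fin q) ℝ) (i : Fin m) (c : ℝ) :
    frobSq (E - c • vecMulVec (A i) (B *ᵥ (A * E * B) i)) =
      frobSq E - 2 * c * vnormSq ((A * E * B) i)
        + c ^ 2 * (vnormSq (A i) * vnormSq (B *ᵥ (A * E * B) i)) := by
  rw [frobSq_sub_expand, frobSq_smul, frobSq_vecMulVec]
  have : ∑ x, ∑ j, E x j * (c • vecMulVec (A i) (B *ᵥ (A * E * B) i)) x j
      = c * vnormSq ((A * E * B) i) := by
    rw [← inner_step A B E i, Finset.mul_sum]
    refine Finset.sum_congr rfl fun x _ => ?_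
    rw [Finset.mul_sum]
    refine Finset.sum_congr rfl fun j _ => ?_
    simp only [Matrix.smul_apply, smul_eq_mul]
    ring
  rw [this]
  ring

lemma frobSq_neg {a b : ℕ} (X : Matrix (Fin a) (Fin b) ℝ) : frobSq (-X) = frobSq X := by
  unfold frobSq
  refine Finset.sum_congr rfl fun i _ => Finset.sum_congr rfl fun j _ => ?_
  rw [Matrix.neg_apply, neg_sq]

lemma frobSq_sum_le {a b : ℕ} (r : ℕ) (F : ℕ → Matrix (Fin a) (Fin b) ℝ) :
    frobSq (∑ t ∈ Finset.range r, F t) ≤ (r : ℝ) * ∑ t ∈ Finset.range r, frobSq (F t) := by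
  unfold frobSq
  calc ∑ i, ∑ j, ((∑ t ∈ Finset.range r, F t) i j) ^ 2
      ≤ ∑ i, ∑ j, ((r : ℝ) * ∑ t ∈ Finset.range r, (F t i j)^2) := by
        refine Finset.sum_le_sum fun i _ => Finset.sum_le_sum fun j _ => ?_
        have h : ((∑ t ∈ Finset.range r, F t) i j) = ∑ t ∈ Finset.range r, F t i j := by
          rw [Matrix.sum_apply]
        rw [h]
        simpa using sq_sum_le_card_mul_sum_sq (s := Finset.range r)
          (f := fun t => F t i j)
    _ = (r : ℝ) * ∑ t ∈ Finset.range r, ∑ i, ∑ j, (F t i j)^2 := by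
        simp only [Finset.mul_sum]
        calc ∑ i : Fin a, ∑ j : Fin b, ∑ t ∈ Finset.range r, (r : ℝ) * (F t i j)^2
            = ∑ i : Fin a, ∑ t ∈ Finset.range r, ∑ j : Fin b, (r : ℝ) * (F t i j)^2 := by
              refine Finset.sum_congr rfl fun i _ => ?_
              rw [Finset.sum_comm]
          _ = ∑ t ∈ Finset.range r, ∑ i : Fin a, ∑ j : Fin b, (r : ℝ) * (F t i j)^2 := by
              rw [Finset.sum_comm]

lemma vecMulVec_neg_right {a b : ℕ} (u : Fin a → ℝ) (v : Fin b → ℝ) :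
    vecMulVec u (-v) = -vecMulVec u v := by
  ext i j
  simp [Matrix.vecMulVec_apply]

/-- `Mp` is the Moore–Penrose pseudoinverse of `M`: the four Penrose conditions. -/
def IsMPInv {a b : ℕ} (M : Matrix (Fin a) (Fin b) ℝ) (Mp : Matrix (Fin b) (Fin a) ℝ) : Prop :=
  M * Mp * M = M ∧ Mp * M * Mp = Mp ∧ (M * Mp)ᵀ = M * Mp ∧ (Mp * M)ᵀ = Mp * M

/-- Theorem 3.3: the cyclic BK method converges (in Frobenius norm) to
`X⋆⁰ = A⁺CB⁺ + X⁰ − A⁺A X⁰ B B⁺`, which solves `AXB = C`. -/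
theorem stmt5 {m p q n : ℕ} (hm : 0 < m)
    (A : Matrix (Fin m) (Fin p) ℝ) (B : Matrix (Fin q) (Fin n) ℝ) (C : Matrix (Fin m) (Fin n) ℝ)
    (Ap : Matrix (Fin p) (Fin m) ℝ) (Bp : Matrix (Fin n) (Fin q) ℝ)
    (hAp : IsMPInv A Ap) (hBp : IsMPInv B Bp)
    (hrows : ∀ i : Fin m, A i ≠ 0)
    (hcons : ∃ X₀ : Matrix (Fin p) (Fin q) ℝ, A * X₀ * B = C)
    (α : ℝ) (hα1 : 0 < α) (hα2 : α < 2 / specNorm B ^ 2)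
    (X : ℕ → Matrix (Fin p) (Fin q) ℝ)
    (hX : ∀ k : ℕ, X (k + 1) = X k + (α / vnormSq (A ⟨k % m, Nat.mod_lt k hm⟩)) •
      vecMulVec (A ⟨k % m, Nat.mod_lt k hm⟩)
        (B *ᵥ ((C - A * X k * B) ⟨k % m, Nat.mod_lt k hm⟩))) :
    Tendsto (fun k => frobNorm (X k - (Ap * C * Bp + X 0 - Ap * A * X 0 * B * Bp)))
        atTop (nhds 0) ∧
    A * (Ap * C * Bp + X 0 - Ap * A * X 0 * B * Bp) * B = C := by
  obtain ⟨X₀, hX₀⟩ := hcons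
  obtain ⟨hA1, hA2, hA3, hA4⟩ := hAp
  obtain ⟨hB1, hB2, hB3, hB4⟩ := hBp
  set Xs := Ap * C * Bp + X 0 - Ap * A * X 0 * B * Bp with hXs
  -- the solution property
  have cancelA : ∀ Z : Matrix (Fin p) (Fin n) ℝ, A * (Ap * (A * Z)) = A * Z := by
    intro Z; rw [← Matrix.mul_assoc, ← Matrix.mul_assoc, hA1]
  have hBBpB : B * (Bp * B) = B := by rw [← Matrix.mul_assoc, hB1]
  have hsol : A * Xs * B = C := by
    rw [hXs, ← hX₀]
    simp only [Matrix.mul_add, Matrix.mul_sub, Matrix.add_mul, Matrix.sub_mul,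
      Matrix.mul_assoc, hBBpB, cancelA]
    abel
  refine ⟨?_, hsol⟩
  clear_value Xs
  set E : ℕ → Matrix (Fin p) (Fin q) ℝ := fun k => X k - Xs with hE
  set I : ℕ → Fin m := fun k => ⟨k % m, Nat.mod_lt k hm⟩ with hI
  clear_value E I
  -- the recursion in error form
  have hrec : ∀ k, E (k + 1) = E k - (α / vnormSq (A (I k))) •
      vecMulVec (A (I k)) (B *ᵥ (A * E k * B) (I k)) := by
    intro k
    have hmat : C - A * X k * B = -(A * (X k - Xs) * B) := by
      calc C - A * X k * B = A * Xs * B - A * X k * B := by rw [hsol]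
        _ = -(A * (X k - Xs) * B) := by rw [Matrix.mul_sub, Matrix.sub_mul, neg_sub]
    simp only [hE, hI]
    rw [hX k, hmat]
    have hneg : (-(A * (X k - Xs) * B)) (⟨k % m, Nat.mod_lt k hm⟩ : Fin m)
        = -((A * (X k - Xs) * B) (⟨k % m, Nat.mod_lt k hm⟩ : Fin m)) := rfl
    rw [hneg, Matrix.mulVec_neg, vecMulVec_neg_right, smul_neg, ← sub_eq_add_neg,
      sub_right_comm]
  set W : ℕ → ℝ := fun k => vnormSq ((A * E k * B) (I k)) with hW
  set F : ℕ → ℝ := fun k => frobSq (E k) with hF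
  clear_value W F
  -- index bounds
  haveI : Nonempty (Fin m) := ⟨⟨0, hm⟩⟩
  set Amax := Finset.univ.sup' Finset.univ_nonempty (fun i : Fin m => vnormSq (A i)) with hAmax
  set Amin := Finset.univ.inf' Finset.univ_nonempty (fun i : Fin m => vnormSq (A i)) with hAmin
  clear_value Amax Amin
  have hle_max : ∀ i : Fin m, vnormSq (A i) ≤ Amax := by
    intro i; rw [hAmax]; exact Finset.le_sup' (fun i : Fin m => vnormSq (A i)) (Finset.mem_univ i)
  have hmin_le : ∀ i : Fin m, Amin ≤ vnormSq (A i) := by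
    intro i; rw [hAmin]; exact Finset.inf'_le (fun i : Fin m => vnormSq (A i)) (Finset.mem_univ i)
  have hAmin_pos : 0 < Amin := by
    rw [hAmin]; exact (Finset.lt_inf'_iff Finset.univ_nonempty).mpr fun i _ => vnormSq_pos (hrows i)
  have hAmax_pos : 0 < Amax :=
    lt_of_lt_of_le hAmin_pos (le_trans (hmin_le ⟨0, hm⟩) (hle_max ⟨0, hm⟩))
  set sB := specNorm B with hsB
  clear_value sB
  have hs0 : 0 ≤ sB := by rw [hsB]; exact norm_nonneg _
  have h2 : 0 < 2 - α * sB ^ 2 := by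
    rcases eq_or_lt_of_le hs0 with h | h
    · rw [← h]; norm_num
    · have := (lt_div_iff₀ (by positivity)).mp hα2
      linarith
  set β := α * (2 - α * sB ^ 2) / Amax with hβ
  clear_value β
  have hβpos : 0 < β := by rw [hβ]; exact div_pos (mul_pos hα1 h2) hAmax_pos
  -- per-step decrease
  have hdec : ∀ k, F (k + 1) ≤ F k - β * W k := by
    intro k
    have hexp : F (k + 1) = F k - 2 * (α / vnormSq (A (I k))) * W k
        + (α / vnormSq (A (I k))) ^ 2 *
          (vnormSq (A (I k)) * vnormSq (B *ᵥ (A * E k * B) (I k))) := by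
      simp only [hF, hW]
      rw [hrec k]
      exact step_frobSq A B (E k) (I k) _
    have hna_pos : 0 < vnormSq (A (I k)) := vnormSq_pos (hrows (I k))
    have hna_le : vnormSq (A (I k)) ≤ Amax := hle_max (I k)
    have hWnn : 0 ≤ W k := by rw [hW]; exact vnormSq_nonneg _
    have hvbw : vnormSq (B *ᵥ (A * E k * B) (I k)) ≤ sB ^ 2 * W k := by
      rw [hW, hsB]; exact vnormSq_mulVec_le_spec B ((A * E k * B) (I k))
    have hvbwnn : 0 ≤ vnormSq (B *ᵥ (A * E k * B) (I k)) := vnormSq_nonneg _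
    have key : F k - F (k + 1) = (α / vnormSq (A (I k))) *
        (2 * W k - α * vnormSq (B *ᵥ (A * E k * B) (I k))) := by
      rw [hexp]; field_simp; ring
    have h1 : (2 - α * sB ^ 2) * W k
        ≤ 2 * W k - α * vnormSq (B *ᵥ (A * E k * B) (I k)) := by
      have hmm := mul_le_mul_of_nonneg_left hvbw hα1.le
      have hr : (2 - α * sB ^ 2) * W k = 2 * W k - α * (sB ^ 2 * W k) := by ring
      linarith
    have h2 : β * W k ≤ (α / vnormSq (A (I k))) * ((2 - α * sB ^ 2) * W k) := by
      rw [hβ]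
      have hdd : α / Amax ≤ α / vnormSq (A (I k)) := by gcongr
      calc α * (2 - α * sB ^ 2) / Amax * W k
          = (α / Amax) * ((2 - α * sB ^ 2) * W k) := by ring
        _ ≤ (α / vnormSq (A (I k))) * ((2 - α * sB ^ 2) * W k) :=
            mul_le_mul_of_nonneg_right hdd (mul_nonneg h2.le hWnn)
    have h3 : β * W k ≤ F k - F (k + 1) := by
      rw [key]
      exact h2.trans (mul_le_mul_of_nonneg_left h1 (by positivity))
    linarith
  have hanti : Antitone F := by
    refine antitone_nat_of_succ_le fun k => ?_
    have h1 := hdec k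
    have h2 := mul_nonneg hβpos.le (vnormSq_nonneg ((A * E k * B) (I k)))
    calc F (k+1) ≤ F k - β * W k := h1
      _ ≤ F k := by simpa [hW] using h2
  -- summability of the residuals
  have hW0 : Tendsto W atTop (nhds 0) := by
    have hsum : ∀ N, ∑ k ∈ Finset.range N, W k ≤ F 0 / β := by
      intro N
      have htel : ∑ k ∈ Finset.range N, (F k - F (k + 1)) = F 0 - F N :=
        Finset.sum_range_sub' F N
      have h1 : β * ∑ k ∈ Finset.range N, W k ≤ F 0 - F N := by
        rw [← htel, Finset.mul_sum]
        exact Finset.sum_le_sum fun k _ => by linarith [hdec k]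
      have hFN : 0 ≤ F N := by rw [hF]; exact frobSq_nonneg _
      rw [le_div_iff₀ hβpos]
      nlinarith
    have hsummable : Summable W :=
      summable_of_sum_range_le (fun k => by rw [hW]; exact vnormSq_nonneg _) hsum
    exact hsummable.tendsto_atTop_zero
  -- step differences tend to zero
  set γ := α ^ 2 / Amin * frobSq B with hγdef
  clear_value γ
  have hγ : ∀ k, frobSq (E (k + 1) - E k) ≤ γ * W k := by
    intro k
    have hdK : E (k + 1) - E k = -((α / vnormSq (A (I k))) •
        vecMulVec (A (I k)) (B *ᵥ (A * E k * B) (I k))) := by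
      rw [hrec k]; abel
    rw [hdK, frobSq_neg, frobSq_smul, frobSq_vecMulVec]
    have hna_pos : 0 < vnormSq (A (I k)) := vnormSq_pos (hrows (I k))
    have hna_ge : Amin ≤ vnormSq (A (I k)) := hmin_le (I k)
    have hvbw : vnormSq (B *ᵥ (A * E k * B) (I k)) ≤ frobSq B * W k := by
      rw [hW]; exact vnormSq_mulVec_le _ _
    have hWnn : 0 ≤ W k := by rw [hW]; exact vnormSq_nonneg _
    calc (α / vnormSq (A (I k))) ^ 2 *
          (vnormSq (A (I k)) * vnormSq (B *ᵥ (A * E k * B) (I k)))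
        = (α ^ 2 / vnormSq (A (I k))) * vnormSq (B *ᵥ (A * E k * B) (I k)) := by
          field_simp
      _ ≤ (α ^ 2 / Amin) * (frobSq B * W k) := by
          refine mul_le_mul ?_ hvbw (vnormSq_nonneg _) (by positivity)
          gcongr
      _ = γ * W k := by rw [hγdef]; ring
  have hD0 : Tendsto (fun k => frobSq (E (k + 1) - E k)) atTop (nhds 0) := by
    refine squeeze_zero (fun k => frobSq_nonneg _) hγ ?_
    simpa using hW0.const_mul γ
  -- the invariant subspace
  have hAAt : Ap * A * Aᵀ = Aᵀ := by
    calc Ap * A * Aᵀ = (Ap * A)ᵀ * Aᵀ := by rw [hA4]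
      _ = (A * (Ap * A))ᵀ := by rw [← Matrix.transpose_mul]
      _ = Aᵀ := by rw [← Matrix.mul_assoc, hA1]
  have hApA_row : ∀ i : Fin m, (Ap * A) *ᵥ (A i) = A i := by
    intro i
    funext x
    have h1 : ((Ap * A) *ᵥ (A i)) x = ((Ap * A) * Aᵀ) x i := by
      simp only [Matrix.mulVec, dotProduct, Matrix.mul_apply, Matrix.transpose_apply]
    rw [h1, hAAt]
    rfl
  have hU : ∀ (i : Fin m) (v : Fin n → ℝ),
      Ap * A * vecMulVec (A i) (B *ᵥ v) * B * Bp = vecMulVec (A i) (B *ᵥ v) := by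
    intro i v
    rw [mul_vecMulVec', hApA_row i, Matrix.mul_assoc, vecMulVec_mul', hB3,
      Matrix.mulVec_mulVec, hB1]
  have hinv : ∀ k, Ap * A * E k * B * Bp = E k := by
    intro k
    induction k with
    | zero =>
      have hE0 : E 0 = Ap * (A * X 0 * B - C) * Bp := by
        simp only [hE]
        rw [hXs]
        simp only [Matrix.mul_sub, Matrix.sub_mul, Matrix.mul_assoc]
        abel
      rw [hE0]
      simp only [← Matrix.mul_assoc]
      rw [hA2]
      rw [Matrix.mul_assoc (Ap * (A * X 0 * B - C)),
        Matrix.mul_assoc (Ap * (A * X 0 * B - C)), hB2]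
    | succ k ih =>
      rw [hrec k, Matrix.mul_sub, Matrix.sub_mul, Matrix.sub_mul, Matrix.mul_smul,
        Matrix.smul_mul, Matrix.smul_mul, ih, hU (I k) ((A * E k * B) (I k))]
  have hEbound : ∀ k, frobSq (E k) ≤ frobSq Ap * frobSq Bp * frobSq (A * E k * B) := by
    intro k
    have heq : E k = Ap * (A * E k * B) * Bp := by
      conv_lhs => rw [← hinv k]
      simp only [Matrix.mul_assoc]
    calc frobSq (E k) = frobSq (Ap * (A * E k * B) * Bp) := by rw [← heq]
      _ ≤ frobSq (Ap * (A * E k * B)) * frobSq Bp := frobSq_mul_le _ _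
      _ ≤ (frobSq Ap * frobSq (A * E k * B)) * frobSq Bp :=
          mul_le_mul_of_nonneg_right (frobSq_mul_le _ _) (frobSq_nonneg _)
      _ = frobSq Ap * frobSq Bp * frobSq (A * E k * B) := by ring
  -- subsequence indices
  have hsub : ∀ r : ℕ, Tendsto (fun j : ℕ => j * m + r) atTop atTop := by
    intro r
    refine tendsto_atTop_mono (fun j => ?_) tendsto_id
    calc (id j : ℕ) = j := rfl
      _ ≤ j * m := Nat.le_mul_of_pos_right j hm
      _ ≤ j * m + r := Nat.le_add_right _ _
  have hG0 : Tendsto (fun j => frobSq (A * E (j * m) * B)) atTop (nhds 0) := by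
    have hrowlim : ∀ r : Fin m,
        Tendsto (fun j => vnormSq ((A * E (j * m) * B) r)) atTop (nhds 0) := by
      intro r
      have hIr : ∀ j : ℕ, I (j * m + (r : ℕ)) = r := by
        intro j
        rw [hI]
        exact Fin.ext (by simp [Nat.mul_add_mod', Nat.mod_eq_of_lt r.isLt])
      set S : ℕ → ℝ := fun j =>
        ∑ t ∈ Finset.range m, frobSq (E (j * m + t + 1) - E (j * m + t)) with hS
      clear_value S
      have hSnn : ∀ j, 0 ≤ S j := by
        intro j; rw [hS]
        exact Finset.sum_nonneg fun t _ => frobSq_nonneg _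
      have hSlim : Tendsto S atTop (nhds 0) := by
        rw [hS]
        have h := tendsto_finset_sum (Finset.range m)
          (fun t (_ : t ∈ Finset.range m) => hD0.comp (hsub t))
        simpa using h
      have hbound : ∀ j, vnormSq ((A * E (j * m) * B) r)
          ≤ 2 * W (j * m + (r : ℕ)) + 2 * (frobSq A * ((m : ℝ) * S j) * frobSq B) := by
        intro j
        have hdiff : A * E (j * m) * B
            = A * E (j * m + (r : ℕ)) * B - A * (E (j * m + (r : ℕ)) - E (j * m)) * B := by
          rw [Matrix.mul_sub, Matrix.sub_mul]
          abel
        have hrow : (A * E (j * m) * B) r = (A * E (j * m + (r : ℕ)) * B) r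
            - (A * (E (j * m + (r : ℕ)) - E (j * m)) * B) r := by
          rw [hdiff]; rfl
        have h1 : vnormSq ((A * E (j * m) * B) r)
            ≤ 2 * vnormSq ((A * E (j * m + (r : ℕ)) * B) r)
              + 2 * vnormSq ((A * (E (j * m + (r : ℕ)) - E (j * m)) * B) r) := by
          rw [hrow]
          exact vnormSq_sub_le _ _
        have h2 : vnormSq ((A * E (j * m + (r : ℕ)) * B) r) = W (j * m + (r : ℕ)) := by
          simp only [hW]; rw [hIr j]
        have h3 : vnormSq ((A * (E (j * m + (r : ℕ)) - E (j * m)) * B) r)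
            ≤ frobSq A * ((m : ℝ) * S j) * frobSq B := by
          have hD : E (j * m + (r : ℕ)) - E (j * m)
              = ∑ t ∈ Finset.range (r : ℕ), (E (j * m + t + 1) - E (j * m + t)) :=
            (Finset.sum_range_sub (fun t => E (j * m + t)) (r : ℕ)).symm
          have hDS : frobSq (E (j * m + (r : ℕ)) - E (j * m)) ≤ (m : ℝ) * S j := by
            rw [hD]
            calc frobSq (∑ t ∈ Finset.range (r : ℕ), (E (j * m + t + 1) - E (j * m + t)))
                ≤ ((r : ℕ) : ℝ) * ∑ t ∈ Finset.range (r : ℕ),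
                    frobSq (E (j * m + t + 1) - E (j * m + t)) :=
                  frobSq_sum_le (r : ℕ) _
              _ ≤ (m : ℝ) * S j := by
                  have hr : (((r : ℕ) : ℕ) : ℝ) ≤ (m : ℝ) := by
                    exact_mod_cast r.isLt.le
                  have hss : ∑ t ∈ Finset.range (r : ℕ),
                      frobSq (E (j * m + t + 1) - E (j * m + t)) ≤ S j := by
                    rw [hS]
                    exact Finset.sum_le_sum_of_subset_of_nonneg
                      (Finset.range_subset_range.mpr r.isLt.le) (fun t _ _ => frobSq_nonneg _)
                  have hsnn : 0 ≤ ∑ t ∈ Finset.range (r : ℕ),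
                      frobSq (E (j * m + t + 1) - E (j * m + t)) :=
                    Finset.sum_nonneg fun t _ => frobSq_nonneg _
                  exact mul_le_mul hr hss hsnn (Nat.cast_nonneg m)
          calc vnormSq ((A * (E (j * m + (r : ℕ)) - E (j * m)) * B) r)
              ≤ frobSq (A * (E (j * m + (r : ℕ)) - E (j * m)) * B) := vnormSq_row_le _ _
            _ ≤ frobSq (A * (E (j * m + (r : ℕ)) - E (j * m))) * frobSq B :=
                frobSq_mul_le _ _
            _ ≤ (frobSq A * frobSq (E (j * m + (r : ℕ)) - E (j * m))) * frobSq B :=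
                mul_le_mul_of_nonneg_right (frobSq_mul_le _ _) (frobSq_nonneg _)
            _ ≤ (frobSq A * ((m : ℝ) * S j)) * frobSq B := by
                refine mul_le_mul_of_nonneg_right ?_ (frobSq_nonneg _)
                exact mul_le_mul_of_nonneg_left hDS (frobSq_nonneg _)
            _ = frobSq A * ((m : ℝ) * S j) * frobSq B := rfl
        rw [h2] at h1
        linarith
      refine squeeze_zero (fun j => vnormSq_nonneg _) hbound ?_
      have hWlim : Tendsto (fun j => W (j * m + (r : ℕ))) atTop (nhds 0) :=
        hW0.comp (hsub (r : ℕ))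
      have l1 := hWlim.const_mul (2 : ℝ)
      have l2 := (((hSlim.const_mul ((m : ℝ))).const_mul (frobSq A)).mul_const
        (frobSq B)).const_mul (2 : ℝ)
      simpa using l1.add l2
    have hsum := tendsto_finset_sum (Finset.univ : Finset (Fin m))
      (fun r (_ : r ∈ Finset.univ) => hrowlim r)
    have heq : (fun j => frobSq (A * E (j * m) * B))
        = fun j => ∑ r : Fin m, vnormSq ((A * E (j * m) * B) r) := by
      funext j
      exact frobSq_eq_sum_rows _
    rw [heq]
    simpa using hsum
  have hFE0 : Tendsto (fun j => F (j * m)) atTop (nhds 0) := by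
    refine squeeze_zero (g := fun j => frobSq Ap * frobSq Bp * frobSq (A * E (j * m) * B))
      (fun j => by rw [hF]; exact frobSq_nonneg _)
      (fun j => by rw [hF]; exact hEbound (j * m)) ?_
    simpa using hG0.const_mul (frobSq Ap * frobSq Bp)
  -- monotone convergence
  have hbdd : BddBelow (Set.range F) := by
    refine ⟨0, fun x hx => ?_⟩
    obtain ⟨k, rfl⟩ := hx
    rw [hF]
    exact frobSq_nonneg _
  have hFL : Tendsto F atTop (nhds (⨅ k, F k)) := tendsto_atTop_ciInf hanti hbdd
  have hL0 : (⨅ k, F k) = 0 := by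
    refine tendsto_nhds_unique ?_ hFE0
    exact hFL.comp (by simpa using hsub 0)
  have hF0 : Tendsto F atTop (nhds 0) := hL0 ▸ hFL
  have hsq := (Real.continuous_sqrt.tendsto 0).comp hF0
  rw [Real.sqrt_zero] at hsq
  have hfn : (fun k => frobNorm (X k - Xs)) = fun k => Real.sqrt (F k) := by
    funext k
    rw [hF, hE]
    rfl
  exact hfn ▸ hsq
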